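/- arXiv:2406.08844 — 3 statements merged into one kernel-verified Lean document; each statement's English description precedes it below -/
import Mathlib

section
/- Let $P^*$ be a stochastic matrix on a finite state space with unique stationary distribution $\pi^*$ and mixing time $t_{\mathrm{mix}}(\epsilon/2)$ (i.e., $\|(P^*)^t \rho - \pi^*\|_1 \le \epsilon/2$ for all probability distributions $\rho$ and all $t \ge t_{\mathrm{mix}}(\epsilon/2)$). Suppose $\{P_t\}_{t\ge 1}$ is a sequence of stochastic matrices with $\|P_t - P^*\|_1 \le \epsilon/(2 t_{\mathrm{mix}}(\epsilon/2))$ for all $t$. Then for any $t \ge t_{\mathrm{mix}}(\epsilon/2)$ and any initial probability distribution $\rho$, $\|P_t P_{t-1} \cdots P_1 \rho - \pi^*\|_1 \le \epsilon$. -/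
/-!
Hybrid argument. Write `t = m + tmix` and compare the perturbed chain `ν_s := P_s ⋯ P_1 ρ` with
the exact chain run for `tmix` steps from `ν_m`. Replacing one `P_s` by `P*` costs at most
`ε / (2 tmix)` in ℓ¹ (applied to a distribution), and the subsequent `P*` steps are ℓ¹
contractions, so the two chains end within `tmix · ε / (2 tmix) = ε / 2` of each other; the exact
one is within `ε / 2` of `π*` by the mixing hypothesis.
-/

open Finset

variable {X : Type*} [Fintype X]

/-- Apply a stochastic kernel to a distribution: `(step P ρ) x' = ∑ x, P x' x * ρ x`. -/
noncomputable def step (P : X → X → ℝ) (ρ : X → ℝ) : X → ℝ :=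
  fun x' => ∑ x, P x' x * ρ x

/-- `P_t P_{t-1} ⋯ P_1 ρ`. -/
noncomputable def seqApply (P : ℕ → X → X → ℝ) (ρ : X → ℝ) : ℕ → X → ℝ
  | 0 => ρ
  | (t + 1) => step (P (t + 1)) (seqApply P ρ t)

def l1Dist (μ ν : X → ℝ) : ℝ := ∑ x, |μ x - ν x|

lemma l1Dist_self (μ : X → ℝ) : l1Dist μ μ = 0 := by
  simp [l1Dist]

lemma l1Dist_triangle (μ ν κ : X → ℝ) : l1Dist μ κ ≤ l1Dist μ ν + l1Dist ν κ := by
  rw [l1Dist, l1Dist, l1Dist, ← sum_add_distrib]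
  exact sum_le_sum fun x _ => abs_sub_le _ _ _

lemma step_nonneg {P : X → X → ℝ} {ρ : X → ℝ} (hP : ∀ x x', 0 ≤ P x' x)
    (hρ : ∀ x, 0 ≤ ρ x) (x' : X) : 0 ≤ step P ρ x' :=
  sum_nonneg fun x _ => mul_nonneg (hP x x') (hρ x)

lemma sum_step {P : X → X → ℝ} (hP : ∀ x, ∑ x', P x' x = 1) (ρ : X → ℝ) :
    ∑ x', step P ρ x' = ∑ x, ρ x := by
  simp only [step]
  rw [sum_comm]
  simp [← sum_mul, hP]

lemma seqApply_nonneg_and_sum {P : ℕ → X → X → ℝ} (hP_nonneg : ∀ t x x', 0 ≤ P t x' x)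
    (hP_sum : ∀ t x, ∑ x', P t x' x = 1) {ρ : X → ℝ} (hρ_nonneg : ∀ x, 0 ≤ ρ x)
    (hρ_sum : ∑ x, ρ x = 1) (t : ℕ) :
    (∀ x, 0 ≤ seqApply P ρ t x) ∧ ∑ x, seqApply P ρ t x = 1 := by
  induction t with
  | zero => exact ⟨hρ_nonneg, hρ_sum⟩
  | succ t ih => exact ⟨step_nonneg (hP_nonneg _) ih.1, (sum_step (hP_sum _) _).trans ih.2⟩

lemma l1Dist_step_le {P : X → X → ℝ} (hP_nonneg : ∀ x x', 0 ≤ P x' x)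
    (hP_sum : ∀ x, ∑ x', P x' x = 1) (μ ν : X → ℝ) :
    l1Dist (step P μ) (step P ν) ≤ l1Dist μ ν := by
  calc l1Dist (step P μ) (step P ν)
      = ∑ x', |∑ x, P x' x * (μ x - ν x)| := by
        simp only [l1Dist, step, mul_sub, sum_sub_distrib]
    _ ≤ ∑ x', ∑ x, P x' x * |μ x - ν x| := by
        gcongr with x'
        refine (abs_sum_le_sum_abs _ _).trans_eq (sum_congr rfl fun x _ => ?_)
        rw [abs_mul, abs_of_nonneg (hP_nonneg x x')]
    _ = l1Dist μ ν := by
        rw [sum_comm]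
        simp [l1Dist, ← sum_mul, hP_sum]

lemma l1Dist_step_step_le {P Q : X → X → ℝ} {C : ℝ}
    (hPQ : ∀ x, ∑ x', |P x' x - Q x' x| ≤ C) {ρ : X → ℝ} (hρ_nonneg : ∀ x, 0 ≤ ρ x)
    (hρ_sum : ∑ x, ρ x = 1) :
    l1Dist (step P ρ) (step Q ρ) ≤ C := by
  calc l1Dist (step P ρ) (step Q ρ)
      = ∑ x', |∑ x, (P x' x - Q x' x) * ρ x| := by
        simp only [l1Dist, step, sub_mul, sum_sub_distrib]
    _ ≤ ∑ x', ∑ x, |P x' x - Q x' x| * ρ x := by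
        gcongr with x'
        refine (abs_sum_le_sum_abs _ _).trans_eq (sum_congr rfl fun x _ => ?_)
        rw [abs_mul, abs_of_nonneg (hρ_nonneg x)]
    _ = ∑ x, (∑ x', |P x' x - Q x' x|) * ρ x := by
        rw [sum_comm]
        simp only [sum_mul]
    _ ≤ ∑ x, C * ρ x := by
        gcongr with x
        · exact hρ_nonneg x
        · exact hPQ x
    _ = C := by rw [← mul_sum, hρ_sum, mul_one]

lemma l1Dist_seqApply_add_le {P : ℕ → X → X → ℝ} {Q : X → X → ℝ} {C : ℝ}
    (hP_nonneg : ∀ t x x', 0 ≤ P t x' x) (hP_sum : ∀ t x, ∑ x', P t x' x = 1)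
    (hQ_nonneg : ∀ x x', 0 ≤ Q x' x) (hQ_sum : ∀ x, ∑ x', Q x' x = 1)
    (hPQ : ∀ t x, ∑ x', |P t x' x - Q x' x| ≤ C) {ρ : X → ℝ} (hρ_nonneg : ∀ x, 0 ≤ ρ x)
    (hρ_sum : ∑ x, ρ x = 1) (m k : ℕ) :
    l1Dist (seqApply P ρ (m + k)) (seqApply (fun _ => Q) (seqApply P ρ m) k) ≤ k * C := by
  induction k with
  | zero => simp [seqApply, l1Dist_self]
  | succ k ih =>
    set ν := seqApply P ρ (m + k)
    obtain ⟨hν_nonneg, hν_sum⟩ := seqApply_nonneg_and_sum hP_nonneg hP_sum hρ_nonneg hρ_sum (m + k)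
    calc l1Dist (step (P (m + k + 1)) ν) (step Q (seqApply (fun _ => Q) (seqApply P ρ m) k))
        ≤ l1Dist (step (P (m + k + 1)) ν) (step Q ν)
            + l1Dist (step Q ν) (step Q (seqApply (fun _ => Q) (seqApply P ρ m) k)) :=
          l1Dist_triangle _ _ _
      _ ≤ C + k * C :=
          add_le_add (l1Dist_step_step_le (hPQ _) hν_nonneg hν_sum)
            ((l1Dist_step_le hQ_nonneg hQ_sum _ _).trans ih)
      _ = (k + 1 : ℕ) * C := by push_cast; ring

theorem stmt0_general
    (Pstar : X → X → ℝ) (pistar : X → ℝ) (P : ℕ → X → X → ℝ)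
    (ε : ℝ) (tmix : ℕ) (htmix : 0 < tmix)
    (hPstar_nonneg : ∀ x x', 0 ≤ Pstar x' x)
    (hPstar_sum : ∀ x, ∑ x', Pstar x' x = 1)
    (hP_nonneg : ∀ t x x', 0 ≤ P t x' x)
    (hP_sum : ∀ t x, ∑ x', P t x' x = 1)
    (hmix : ∀ ρ : X → ℝ, (∀ x, 0 ≤ ρ x) → (∑ x, ρ x = 1) →
      ∀ t ≥ tmix, ∑ x, |seqApply (fun _ => Pstar) ρ t x - pistar x| ≤ ε / 2)
    (hclose : ∀ t x, ∑ x', |P t x' x - Pstar x' x| ≤ ε / (2 * tmix))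
    (ρ : X → ℝ) (hρ_nonneg : ∀ x, 0 ≤ ρ x) (hρ_sum : ∑ x, ρ x = 1) :
    ∀ t ≥ tmix, ∑ x, |seqApply P ρ t x - pistar x| ≤ ε := by
  intro t ht
  obtain ⟨m, rfl⟩ := Nat.exists_eq_add_of_le' ht
  set ν := seqApply P ρ m
  obtain ⟨hν_nonneg, hν_sum⟩ := seqApply_nonneg_and_sum hP_nonneg hP_sum hρ_nonneg hρ_sum m
  have h_hybrid : l1Dist (seqApply P ρ (m + tmix)) (seqApply (fun _ => Pstar) ν tmix) ≤ ε / 2 := by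
    have htmix' : (tmix : ℝ) ≠ 0 := by positivity
    convert l1Dist_seqApply_add_le hP_nonneg hP_sum hPstar_nonneg hPstar_sum hclose
      hρ_nonneg hρ_sum m tmix using 1
    field_simp
  have h_mixed : l1Dist (seqApply (fun _ => Pstar) ν tmix) pistar ≤ ε / 2 :=
    hmix ν hν_nonneg hν_sum tmix le_rfl
  calc l1Dist (seqApply P ρ (m + tmix)) pistar
      ≤ ε / 2 + ε / 2 := (l1Dist_triangle _ _ _).trans (add_le_add h_hybrid h_mixed)
    _ = ε := add_halves ε

/-- Perturbed-chain mixing lemma: if each `P_t` is `ε/(2 t_mix(ε/2))`-close to `P*` in the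
operator ℓ¹ norm, then for `t ≥ t_mix(ε/2)`, `‖P_t ⋯ P_1 ρ - π*‖₁ ≤ ε`. -/
theorem stmt0
    (Pstar : X → X → ℝ) (pistar : X → ℝ) (P : ℕ → X → X → ℝ)
    (ε : ℝ) (hε : 0 < ε) (tmix : ℕ) (htmix : 0 < tmix)
    (hPstar_nonneg : ∀ x x', 0 ≤ Pstar x' x)
    (hPstar_sum : ∀ x, ∑ x', Pstar x' x = 1)
    (hP_nonneg : ∀ t x x', 0 ≤ P t x' x)
    (hP_sum : ∀ t x, ∑ x', P t x' x = 1)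
    (hpistar_nonneg : ∀ x, 0 ≤ pistar x) (hpistar_sum : ∑ x, pistar x = 1)
    (hstat : step Pstar pistar = pistar)
    (hmix : ∀ ρ : X → ℝ, (∀ x, 0 ≤ ρ x) → (∑ x, ρ x = 1) →
      ∀ t ≥ tmix, ∑ x, |seqApply (fun _ => Pstar) ρ t x - pistar x| ≤ ε / 2)
    (hclose : ∀ t x, ∑ x', |P t x' x - Pstar x' x| ≤ ε / (2 * tmix))
    (ρ : X → ℝ) (hρ_nonneg : ∀ x, 0 ≤ ρ x) (hρ_sum : ∑ x, ρ x = 1) :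
    ∀ t ≥ tmix, ∑ x, |seqApply P ρ t x - pistar x| ≤ ε :=
  stmt0_general Pstar pistar P ε tmix htmix hPstar_nonneg hPstar_sum hP_nonneg hP_sum hmix hclose ρ
    hρ_nonneg hρ_sum
end

section
/- Let $K^\epsilon$ be a family of ergodic transition kernels on a finite set $V$ satisfying the resistance bounds: for each ordered pair $(v, v')$ there is a constant $R(v \to v') \in [0, \infty]$ and constants $0 < C_1 \le C_2$ with $C_1 \epsilon^{R(v \to v')} \le K^\epsilon(v' \mid v) \le C_2 \epsilon^{R(v \to v')}$ for all $\epsilon \in (0,1)$. Define $\mu^\epsilon(v) = \sum_{T \in \mathcal{T}(v)} \prod_{(u \to u') \in T} K^\epsilon(u' \mid u)$, the Markov-chain-tree weight of $v$, where $\mathcal{T}(v)$ is the set of spanning trees rooted at $v$. Then with $\gamma(v) := \min_{T \in \mathcal{T}(v)} \sum_{(u\to u') \in T} R(u \to u')$, we have $C_1^{|V|-1} \epsilon^{\gamma(v)} \le \mu^\epsilon(v) \le C_2^{|V|-1} |\mathcal{T}(v)| \, \epsilon^{\gamma(v)}$ for all $\epsilon \in (0,1)$. -/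
open Finset
open scoped ENNReal

variable {V : Type*} [Fintype V] [DecidableEq V]

/-- A spanning tree rooted at `v`, represented by its successor function `f`:
from every vertex there is a directed path `u → f u → f (f u) → ⋯` reaching `v`.
Its edge set is `{(u, f u) : u ≠ v}`, which has exactly `|V| - 1` edges. -/
def IsRootedTree (f : V → V) (v : V) : Prop := f v = v ∧ ∀ u, ∃ k, f^[k] u = v

open Classical in
/-- The set of spanning trees rooted at `v`. -/
noncomputable def rootedTrees (v : V) : Finset (V → V) :=
  Finset.univ.filter (fun f => IsRootedTree f v)

/-- The weight `∏_{(u → u') ∈ T} K(u' ∣ u)` of a rooted tree (here `K u u'` denotes the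
transition probability from `u` to `u'`). -/
noncomputable def treeWeight (K : V → V → ℝ) (v : V) (f : V → V) : ℝ :=
  ∏ u ∈ Finset.univ.erase v, K u (f u)

/-- The total resistance `∑_{(u → u') ∈ T} R(u → u')` of a rooted tree. -/
noncomputable def treeResist (R : V → V → ℝ≥0∞) (v : V) (f : V → V) : ℝ≥0∞ :=
  ∑ u ∈ Finset.univ.erase v, R u (f u)

/-- `ε^r` for `r ∈ [0,∞]`, with `ε^∞ = 0`. -/
noncomputable def epow (ε : ℝ) (r : ℝ≥0∞) : ℝ := if r = ⊤ then 0 else ε ^ r.toReal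

/-- The Markov-chain-tree weight `μ^ε(v) = ∑_{T ∈ 𝒯(v)} ∏_{(u→u') ∈ T} K^ε(u' ∣ u)`. -/
noncomputable def treeMu (K : V → V → ℝ) (v : V) : ℝ :=
  ∑ f ∈ rootedTrees v, treeWeight K v f

/-- The stochastic potential `γ(v) = min_{T ∈ 𝒯(v)} R(T)`. -/
noncomputable def stochPot (R : V → V → ℝ≥0∞) (v : V) : ℝ≥0∞ :=
  (rootedTrees v).inf (treeResist R v)


lemma epow_nonneg {ε : ℝ} (hε : 0 < ε) (r : ℝ≥0∞) : 0 ≤ epow ε r := by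
  unfold epow
  split_ifs
  · exact le_rfl
  · positivity

lemma epow_anti {ε : ℝ} (hε : 0 < ε) (hε1 : ε ≤ 1) {r r' : ℝ≥0∞} (h : r ≤ r') :
    epow ε r' ≤ epow ε r := by
  by_cases h' : r' = ⊤
  · simp only [epow, h', if_pos rfl]
    exact epow_nonneg hε r
  · have hr : r ≠ ⊤ := fun hr => h' (top_le_iff.mp (hr ▸ h))
    simp only [epow, if_neg h', if_neg hr]
    exact Real.rpow_le_rpow_of_exponent_ge hε hε1 (ENNReal.toReal_mono h' h)

lemma epow_sum {ε : ℝ} (hε : 0 < ε) {ι : Type*} (s : Finset ι) (r : ι → ℝ≥0∞) :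
    ∏ u ∈ s, epow ε (r u) = epow ε (∑ u ∈ s, r u) := by
  by_cases h : ∃ u ∈ s, r u = ⊤
  · obtain ⟨u, hu, hru⟩ := h
    have hsum : ∑ u ∈ s, r u = ⊤ := ENNReal.sum_eq_top.mpr ⟨u, hu, hru⟩
    rw [hsum]
    simp only [epow, if_pos rfl]
    exact Finset.prod_eq_zero hu (by simp [epow, hru])
  · push_neg at h
    have hsum : ∑ u ∈ s, r u ≠ ⊤ := ENNReal.sum_ne_top.mpr h
    simp only [epow, if_neg hsum]
    rw [ENNReal.toReal_sum h, Real.rpow_sum_of_pos hε]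
    exact Finset.prod_congr rfl fun u hu => by rw [if_neg (h u hu)]

lemma rootedTrees_nonempty (v : V) : (rootedTrees v).Nonempty := by
  refine ⟨fun _ => v, ?_⟩
  simp only [rootedTrees, Finset.mem_filter, Finset.mem_univ, true_and]
  exact ⟨rfl, fun u => ⟨1, rfl⟩⟩

/-- Under the resistance bounds `C₁ ε^{R(v→v')} ≤ K^ε(v' ∣ v) ≤ C₂ ε^{R(v→v')}`, the tree
weights satisfy `C₁^{|V|-1} ε^{γ(v)} ≤ μ^ε(v) ≤ C₂^{|V|-1} |𝒯(v)| ε^{γ(v)}`. -/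
theorem stmt7 (K : ℝ → V → V → ℝ) (R : V → V → ℝ≥0∞) (C1 C2 : ℝ)
    (hC1 : 0 < C1) (hC12 : C1 ≤ C2) (hcard : 2 ≤ Fintype.card V)
    (hbound : ∀ ε ∈ Set.Ioo (0 : ℝ) 1, ∀ v v',
      C1 * epow ε (R v v') ≤ K ε v v' ∧ K ε v v' ≤ C2 * epow ε (R v v')) :
    ∀ ε ∈ Set.Ioo (0 : ℝ) 1, ∀ v : V,
      C1 ^ (Fintype.card V - 1) * epow ε (stochPot R v) ≤ treeMu (K ε) v ∧
      treeMu (K ε) v ≤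
        C2 ^ (Fintype.card V - 1) * (rootedTrees v).card * epow ε (stochPot R v) := by
  intro ε hε v
  obtain ⟨hε0, hε1⟩ := hε
  have hε1' : ε ≤ 1 := le_of_lt hε1
  have hK0 : ∀ u u', 0 ≤ K ε u u' := fun u u' =>
    le_trans (mul_nonneg hC1.le (epow_nonneg hε0 _)) ((hbound ε ⟨hε0, hε1⟩ u u').1)
  have hcard_erase : (Finset.univ.erase v).card = Fintype.card V - 1 := by
    rw [Finset.card_erase_of_mem (Finset.mem_univ v), Finset.card_univ]
  constructor
  · -- lower bound
    obtain ⟨f₀, hf₀, hγ⟩ := Finset.exists_mem_eq_inf (rootedTrees v)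
      (rootedTrees_nonempty v) (treeResist R v)
    have h1 : C1 ^ (Fintype.card V - 1) * epow ε (stochPot R v) ≤ treeWeight (K ε) v f₀ := by
      rw [stochPot, hγ, treeResist, ← epow_sum hε0, ← hcard_erase, ← Finset.prod_const,
        ← Finset.prod_mul_distrib]
      exact Finset.prod_le_prod (fun u _ => mul_nonneg hC1.le (epow_nonneg hε0 _))
        (fun u _ => (hbound ε ⟨hε0, hε1⟩ u (f₀ u)).1)
    refine le_trans h1 ?_
    exact Finset.single_le_sum (fun f _ => Finset.prod_nonneg fun u _ => hK0 u (f u)) hf₀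
  · -- upper bound
    have h2 : ∀ f ∈ rootedTrees v,
        treeWeight (K ε) v f ≤ C2 ^ (Fintype.card V - 1) * epow ε (stochPot R v) := by
      intro f hf
      have hw : treeWeight (K ε) v f ≤ C2 ^ (Fintype.card V - 1) * epow ε (treeResist R v f) := by
        rw [treeResist, ← epow_sum hε0, ← hcard_erase, ← Finset.prod_const,
          ← Finset.prod_mul_distrib]
        exact Finset.prod_le_prod (fun u _ => hK0 u (f u))
          (fun u _ => (hbound ε ⟨hε0, hε1⟩ u (f u)).2)
      refine le_trans hw ?_
      have : epow ε (treeResist R v f) ≤ epow ε (stochPot R v) :=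
        epow_anti hε0 hε1' (Finset.inf_le hf)
      have hC2 : (0:ℝ) ≤ C2 ^ (Fintype.card V - 1) := pow_nonneg (hC1.trans_le hC12).le _
      exact mul_le_mul_of_nonneg_left this hC2
    calc treeMu (K ε) v ≤ ∑ _f ∈ rootedTrees v, C2 ^ (Fintype.card V - 1) * epow ε (stochPot R v) :=
          Finset.sum_le_sum h2
      _ = C2 ^ (Fintype.card V - 1) * (rootedTrees v).card * epow ε (stochPot R v) := by
          rw [Finset.sum_const, nsmul_eq_mul]; ring
end

section
/- In the treasure-digging game, under the stationary Gibbs policy $\pi^\epsilon$ of log-linear learning applied backward (stage 2 Gibbs with respect to $r_2(s,\cdot)$, stage 1 Gibbs with respect to $Q_1^{\pi^\epsilon_2}$), the limit $\pi^* = \lim_{\epsilon\to 0}\pi^\epsilon$ exists and places probability 1 on action $(1,1)$ at the initial state and at state $B$, i.e., the stochastically stable policy is the potential-maximizing (globally optimal) equilibrium with total reward $2$, not the equilibrium with reward $1.5$. -/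
/-! The two-stage treasure-digging game: two players, actions `{0,1}` encoded as `Bool`
(`false = 0`, `true = 1`), stage-2 states `Fin 3` (`0 = A`, `1 = O`, `2 = B`). -/

/-- Stage-1 reward. -/
noncomputable def r1 (a : Bool × Bool) : ℝ := if a = (false, false) then 1 else 0

/-- Transition from stage 1 to the stage-2 state. -/
def nextState (a : Bool × Bool) : Fin 3 :=
  if a = (false, false) then 0 else if a = (true, true) then 2 else 1

/-- Stage-2 reward. -/
noncomputable def r2 (s : Fin 3) (a : Bool × Bool) : ℝ :=
  if s = 0 then (if a = (false, false) then 0.5 else 0)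
  else if s = 1 then (if a = (false, false) then 1 else 0)
  else (if a = (false, false) then 1 else if a = (true, true) then 2 else 0)

open Finset Filter

/-- Stage-2 Gibbs (log-linear stationary) policy with respect to `r₂(s, ·)`. -/
noncomputable def pi2 (ε : ℝ) (s : Fin 3) (a : Bool × Bool) : ℝ :=
  ε ^ (-(r2 s a)) / ∑ b : Bool × Bool, ε ^ (-(r2 s b))

/-- Stage-1 `Q`-function under the stage-2 Gibbs policy `π^ε₂`. -/
noncomputable def Q1eps (ε : ℝ) (a : Bool × Bool) : ℝ :=
  r1 a + ∑ b : Bool × Bool, pi2 ε (nextState a) b * r2 (nextState a) b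

/-- Stage-1 Gibbs policy with respect to `Q₁^{π^ε₂}`. -/
noncomputable def pi1 (ε : ℝ) (a : Bool × Bool) : ℝ :=
  ε ^ (-(Q1eps ε a)) / ∑ b : Bool × Bool, ε ^ (-(Q1eps ε b))

open Topology

/-! As `ε → 0⁺`, a Gibbs distribution `a ↦ ε ^ (-f a) / ∑ b, ε ^ (-f b)` concentrates on the
unique maximiser of the limit of `f`: the weight ratio of `b` to the maximiser `a` is
`ε ^ (f a - f b)`, and the exponent stays bounded away from `0`. At stage 2 this makes the
policy greedy with respect to `r₂`, so `Q₁` tends to `r₁ a + max r₂(s', ·)`, which takes the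
values `1.5, 1, 1, 2` on the four stage-1 actions; its unique maximiser `(1,1)` therefore
receives all the mass at stage 1 as well. -/

lemma tendsto_rpow_nhdsGT_zero_of_tendsto_pos {f : ℝ → ℝ} {c : ℝ} (hc : 0 < c)
    (hf : Tendsto f (𝓝[>] 0) (𝓝 c)) : Tendsto (fun ε => ε ^ f ε) (𝓝[>] 0) (𝓝 0) := by
  simpa [Real.zero_rpow hc.ne'] using
    (tendsto_nhdsWithin_of_tendsto_nhds tendsto_id).rpow hf (Or.inr hc)

lemma tendsto_rpow_sub_of_lt {ι : Type*} {f : ℝ → ι → ℝ} {F : ι → ℝ} {a : ι}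
    (hf : ∀ b, Tendsto (fun ε => f ε b) (𝓝[>] 0) (𝓝 (F b)))
    {b : ι} (hb : F b < F a) :
    Tendsto (fun ε => ε ^ (f ε a - f ε b)) (𝓝[>] 0) (𝓝 0) :=
  tendsto_rpow_nhdsGT_zero_of_tendsto_pos (sub_pos.mpr hb) ((hf a).sub (hf b))

section Gibbs

variable {ι : Type*} [Fintype ι]

noncomputable def gibbs (ε : ℝ) (f : ι → ℝ) (a : ι) : ℝ :=
  ε ^ (-f a) / ∑ b, ε ^ (-f b)

lemma gibbs_eq_inv_sum_rpow {ε : ℝ} (hε : 0 < ε) (f : ι → ℝ) (a : ι) :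
    gibbs ε f a = (∑ b, ε ^ (f a - f b))⁻¹ := by
  have hsplit : ∀ b, ε ^ (f a - f b) = ε ^ f a * ε ^ (-f b) := fun b => by
    rw [sub_eq_add_neg, Real.rpow_add hε]
  rw [gibbs, Finset.sum_congr rfl fun b _ => hsplit b, ← Finset.mul_sum, mul_inv,
    Real.rpow_neg hε.le (f a), div_eq_mul_inv]

lemma gibbs_eq_rpow_mul {ε : ℝ} (hε : 0 < ε) (f : ι → ℝ) (a b : ι) :
    gibbs ε f b = ε ^ (f a - f b) * gibbs ε f a := by
  rw [gibbs, gibbs, mul_div_assoc', ← Real.rpow_add hε, sub_add_eq_add_sub, add_neg_cancel,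
    zero_sub]

variable {f : ℝ → ι → ℝ} {F : ι → ℝ} {a : ι}

lemma tendsto_gibbs_self (hf : ∀ b, Tendsto (fun ε => f ε b) (𝓝[>] 0) (𝓝 (F b)))
    (hmax : ∀ b ≠ a, F b < F a) :
    Tendsto (fun ε => gibbs ε (f ε) a) (𝓝[>] 0) (𝓝 1) := by
  classical
  have hsum : Tendsto (fun ε => ∑ b, ε ^ (f ε a - f ε b)) (𝓝[>] 0)
      (𝓝 (∑ b, if b = a then 1 else 0)) := by
    refine tendsto_finsetSum _ fun b _ => ?_
    by_cases hb : b = a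
    · subst hb
      simp
    · simpa [hb] using tendsto_rpow_sub_of_lt hf (hmax b hb)
  rw [Finset.sum_ite_eq', if_pos (Finset.mem_univ a)] at hsum
  refine (by simpa using hsum.inv₀ one_ne_zero : Tendsto _ _ (𝓝 (1 : ℝ))).congr' ?_
  filter_upwards [self_mem_nhdsWithin] with ε hε
  exact (gibbs_eq_inv_sum_rpow hε _ _).symm

lemma tendsto_gibbs_of_ne (hf : ∀ b, Tendsto (fun ε => f ε b) (𝓝[>] 0) (𝓝 (F b)))
    (hmax : ∀ b ≠ a, F b < F a) {b : ι} (hb : b ≠ a) :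
    Tendsto (fun ε => gibbs ε (f ε) b) (𝓝[>] 0) (𝓝 0) := by
  refine (zero_mul (1 : ℝ) ▸
    (tendsto_rpow_sub_of_lt hf (hmax b hb)).mul (tendsto_gibbs_self hf hmax)).congr' ?_
  filter_upwards [self_mem_nhdsWithin] with ε hε
  exact (gibbs_eq_rpow_mul hε _ a b).symm

lemma tendsto_sum_gibbs_mul (hf : ∀ b, Tendsto (fun ε => f ε b) (𝓝[>] 0) (𝓝 (F b)))
    (hmax : ∀ b ≠ a, F b < F a) (g : ι → ℝ) :
    Tendsto (fun ε => ∑ b, gibbs ε (f ε) b * g b) (𝓝[>] 0) (𝓝 (g a)) := by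
  classical
  rw [← Fintype.sum_ite_eq' a g]
  refine tendsto_finsetSum _ fun b _ => ?_
  by_cases hb : b = a
  · subst hb
    simpa using (tendsto_gibbs_self hf hmax).mul_const (g b)
  · simpa [hb] using (tendsto_gibbs_of_ne hf hmax hb).mul_const (g b)

end Gibbs

def optAction (s : Fin 3) : Bool × Bool := if s = 2 then (true, true) else (false, false)

lemma r2_lt_r2_optAction (s : Fin 3) : ∀ b ≠ optAction s, r2 s b < r2 s (optAction s) := by
  fin_cases s <;> rintro ⟨_ | _, _ | _⟩ h <;> simp [r2, optAction] at h ⊢ <;> norm_num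

noncomputable def Q1greedy (a : Bool × Bool) : ℝ :=
  r1 a + r2 (nextState a) (optAction (nextState a))

lemma Q1greedy_lt_of_ne : ∀ b ≠ (true, true), Q1greedy b < Q1greedy (true, true) := by
  rintro ⟨_ | _, _ | _⟩ <;> norm_num [Q1greedy, r1, r2, nextState, optAction, Fin.ext_iff]

lemma tendsto_Q1eps (a : Bool × Bool) :
    Tendsto (fun ε => Q1eps ε a) (𝓝[>] 0) (𝓝 (Q1greedy a)) :=
  tendsto_const_nhds.add <| tendsto_sum_gibbs_mul (f := fun _ => r2 (nextState a))
    (fun _ => tendsto_const_nhds) (r2_lt_r2_optAction _) _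

-- `pi1 ε` and `pi2 ε s` are definitionally `gibbs ε (Q1eps ε)` and `gibbs ε (r2 s)`.
/-- In the treasure-digging game, the stochastically stable policy of backward log-linear
learning is the globally optimal (potential-maximizing) equilibrium: as `ε → 0⁺`,
`π^ε` places probability `1` on action `(1,1)` at the initial state and at state `B`. -/
theorem stmt19 :
    Tendsto (fun ε => pi1 ε (true, true)) (nhdsWithin 0 (Set.Ioi (0 : ℝ))) (nhds 1) ∧
    Tendsto (fun ε => pi2 ε 2 (true, true)) (nhdsWithin 0 (Set.Ioi (0 : ℝ))) (nhds 1) :=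
  ⟨tendsto_gibbs_self tendsto_Q1eps Q1greedy_lt_of_ne,
    tendsto_gibbs_self (f := fun _ => r2 2) (fun _ => tendsto_const_nhds)
      (r2_lt_r2_optAction 2)⟩
end
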